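/- Let κ be an uncountable cardinal. Then κ is Ulam real-valued measurable if and only if there is a singular countably additive state on B(l²(κ)). -/

import Mathlib

open scoped ComplexOrder

noncomputable section

/-- A finitely additive probability measure defined on all subsets of `X`. -/
def IsFAProb {X : Type} (μ : Set X → ℝ) : Prop :=
  (∀ S : Set X, 0 ≤ μ S) ∧ μ Set.univ = 1 ∧
    ∀ S T : Set X, S ∩ T = ∅ → μ (S ∪ T) = μ S + μ T

/-- The measure vanishes on singletons. -/
def VanishesOnSingletons {X : Type} (μ : Set X → ℝ) : Prop :=
  ∀ x : X, μ {x} = 0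

/-- A countably additive measure. -/
def CountablyAdditiveMeas {X : Type} (μ : Set X → ℝ) : Prop :=
  ∀ S : ℕ → Set X, Pairwise (Function.onFun Disjoint S) →
    μ (⋃ n, S n) = ∑' n, μ (S n)

/-- The Hilbert space `l²(X)`. -/
abbrev L2 (X : Type) := lp (fun _ : X => ℂ) 2

/-- The standard orthonormal basis vector `e_α` of `l²(X)`. -/
def stdBasis {X : Type} (α : X) : L2 X :=
  letI := Classical.decEq X
  lp.single 2 α 1

variable {H : Type} [NormedAddCommGroup H] [InnerProductSpace ℂ H] [CompleteSpace H]

/-- A state on `B(H)`: a linear functional with `φ(1) = 1` which is nonnegative on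
positive operators. -/
def IsStateB (φ : (H →L[ℂ] H) →ₗ[ℂ] ℂ) : Prop :=
  φ 1 = 1 ∧ ∀ x : H →L[ℂ] H, (∀ v : H, 0 ≤ (inner ℂ (x v) v : ℂ)) → 0 ≤ φ x

/-- A projection in `B(H)`: a self-adjoint idempotent. -/
def IsProjB (p : H →L[ℂ] H) : Prop := star p = p ∧ p * p = p

/-- The orthogonal projection of `H` onto the closed linear span of the set `s`. -/
def projCLM (s : Set H) : H →L[ℂ] H :=
  haveI : CompleteSpace ((Submodule.span ℂ s).topologicalClosure) :=
    (Submodule.isClosed_topologicalClosure _).completeSpace_coe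
  ((Submodule.span ℂ s).topologicalClosure.subtypeL).comp
    (Submodule.orthogonalProjection (Submodule.span ℂ s).topologicalClosure)

/-- A singular state on `B(H)`: it vanishes on all compact operators. -/
def SingularB (φ : (H →L[ℂ] H) →ₗ[ℂ] ℂ) : Prop :=
  ∀ x : H →L[ℂ] H, IsCompactOperator ⇑x → φ x = 0

/-- A countably additive state on `B(H)`: `φ(⋁ pₙ) = ∑ φ(pₙ)` for every countable family of
mutually orthogonal projections, where `⋁ pₙ` is the orthogonal projection onto the closed
linear span of the union of the ranges. -/
def CountablyAdditiveB (φ : (H →L[ℂ] H) →ₗ[ℂ] ℂ) : Prop :=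
  ∀ p : ℕ → H →L[ℂ] H, (∀ n, IsProjB (p n)) →
    (Pairwise fun m n => p m * p n = 0) →
    φ (projCLM (⋃ n, Set.range ⇑(p n))) = ∑' n, φ (p n)


/-!
Fix a Hilbert basis `(e α)` of `H`. A countably additive probability measure `μ` vanishing on
points yields the state `φ x = ∫ ⟪e α, x (e α)⟫ dμ(α)`. It is countably additive by dominated
convergence, Bessel's inequality bounding `∑ₙ ‖pₙ (e α)‖²` by `1`; it is singular because a compact
operator sends the weakly null family `(e α)` to a family tending to `0` along the cofinite
filter, so `x (e α) ≠ 0` only on a countable, hence `μ`-null, set of indices.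

Conversely a singular countably additive state `φ` yields `μ S = φ (P S)`, where `P S` projects
onto the closed span of `e '' S`: the `P S` for disjoint `S` are orthogonal, `P (⋃ₙ Sₙ)` is the
projection onto the closed span of the ranges of the `P Sₙ`, and `P {α}` has rank one.
-/

open Filter Topology MeasureTheory Submodule

local notation "⟪" x ", " y "⟫" => inner ℂ x y

theorem IsStarProjection.sum {R ι : Type*} [NonUnitalSemiring R] [StarRing R] {p : ι → R}
    (hp : ∀ i, IsStarProjection (p i)) (horth : Pairwise fun i j => p i * p j = 0)
    (s : Finset ι) : IsStarProjection (∑ i ∈ s, p i) := by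
  induction s using Finset.cons_induction with
  | empty => simp [IsStarProjection.zero]
  | cons a s ha ih =>
    rw [Finset.sum_cons]
    refine (hp a).add ih ?_
    rw [Finset.mul_sum]
    exact Finset.sum_eq_zero fun i hi => horth fun h => ha (h ▸ hi)

theorem Submodule.IsOrtho.topologicalClosure {𝕜 E : Type*} [RCLike 𝕜] [NormedAddCommGroup E]
    [InnerProductSpace 𝕜 E] {U V : Submodule 𝕜 E} (h : U ⟂ V) :
    U.topologicalClosure ⟂ V.topologicalClosure := by
  rw [isOrtho_iff_le, orthogonal_closure]
  exact topologicalClosure_minimal _ (isOrtho_iff_le.1 h) (isClosed_orthogonal V)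

theorem Orthonormal.inner_eq_zero_of_disjoint {𝕜 E X : Type*} [RCLike 𝕜]
    [NormedAddCommGroup E] [InnerProductSpace 𝕜 E] {e : X → E} (he : Orthonormal 𝕜 e)
    {S T : Set X} (hST : Disjoint S T) : ∀ u ∈ e '' S, ∀ v ∈ e '' T, inner 𝕜 u v = 0 := by
  rintro _ ⟨a, ha, rfl⟩ _ ⟨b, hb, rfl⟩
  exact he.inner_eq_zero fun hab => Set.disjoint_left.1 hST ha (hab ▸ hb)

namespace IsStarProjection

variable {p : H →L[ℂ] H}

theorem inner_apply_left (hp : IsStarProjection p) (v w : H) : ⟪p v, w⟫ = ⟪v, p w⟫ :=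
  ContinuousLinearMap.isSelfAdjoint_iff_isSymmetric.1 hp.isSelfAdjoint v w

theorem inner_apply_self (hp : IsStarProjection p) (v : H) : ⟪p v, v⟫ = ⟪p v, p v⟫ := by
  conv_lhs => rw [← hp.isIdempotentElem.eq, mul_apply_eq_comp]
  exact hp.inner_apply_left _ _

theorem inner_self_apply (hp : IsStarProjection p) (v : H) : ⟪v, p v⟫ = (‖p v‖ ^ 2 : ℝ) := by
  rw [← inner_conj_symm, hp.inner_apply_self, inner_self_eq_norm_sq_to_K]
  simp

theorem norm_apply_le (hp : IsStarProjection p) (v : H) : ‖p v‖ ≤ ‖v‖ := by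
  obtain ⟨K, _, rfl⟩ := isStarProjection_iff_eq_starProjection.1 hp
  exact K.norm_starProjection_apply_le v

end IsStarProjection

theorem isProjB_iff_isStarProjection {p : H →L[ℂ] H} : IsProjB p ↔ IsStarProjection p := by
  rw [isStarProjection_iff, IsProjB, IsSelfAdjoint, IsIdempotentElem, and_comm]

theorem Orthonormal.tendsto_inner_cofinite {𝕜 E X : Type*} [RCLike 𝕜] [NormedAddCommGroup E]
    [InnerProductSpace 𝕜 E] {e : X → E} (he : Orthonormal 𝕜 e) (w : E) :
    Tendsto (fun α => inner 𝕜 w (e α)) cofinite (𝓝 0) := by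
  have hsq := (he.inner_products_summable w).tendsto_cofinite_zero
  rw [tendsto_zero_iff_norm_tendsto_zero]
  simpa [norm_inner_symm, Function.comp_def, Real.sqrt_sq_eq_abs] using
    (Real.continuous_sqrt.tendsto 0).comp hsq

theorem IsCompactOperator.tendsto_zero_of_weakly_null {𝕜 E F : Type*} [RCLike 𝕜]
    [NormedAddCommGroup E] [NormedSpace 𝕜 E] [NormedAddCommGroup F] [NormedSpace 𝕜 F]
    {T : E →L[𝕜] F} (hT : IsCompactOperator T) {v : ℕ → E}
    (hbdd : Bornology.IsBounded (Set.range v))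
    (hweak : ∀ f : StrongDual 𝕜 E, Tendsto (fun n => f (v n)) atTop (𝓝 0)) :
    Tendsto (fun n => T (v n)) atTop (𝓝 0) := by
  refine tendsto_of_subseq_tendsto fun ns hns => ?_
  have hK := hT.isCompact_closure_image_of_bounded hbdd
  obtain ⟨a, -, ψ, hψ, hlim⟩ := hK.tendsto_subseq fun n =>
    subset_closure (Set.mem_image_of_mem T (Set.mem_range_self (ns n)))
  have hweak_lim (g : StrongDual 𝕜 F) : g a = 0 :=
    tendsto_nhds_unique ((g.continuous.tendsto a).comp hlim)
      ((hweak (g.comp T)).comp (hns.comp hψ.tendsto_atTop))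
  obtain rfl : a = 0 := SeparatingDual.eq_zero_of_forall_dual_eq_zero hweak_lim
  exact ⟨ψ, hlim⟩

theorem IsCompactOperator.tendsto_cofinite_apply_orthonormal {X F : Type*}
    [NormedAddCommGroup F] [NormedSpace ℂ F] {T : H →L[ℂ] F} (hT : IsCompactOperator T)
    {e : X → H} (he : Orthonormal ℂ e) :
    Tendsto (fun α => T (e α)) cofinite (𝓝 0) := by
  refine Metric.tendsto_nhds.2 fun ε hε => eventually_cofinite.2 ?_
  by_contra hinf
  set g : ℕ → X := fun n => (Set.Infinite.natEmbedding _ hinf n : X)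
  have hg : Function.Injective g :=
    Subtype.coe_injective.comp (Set.Infinite.natEmbedding _ hinf).injective
  have hbdd : Bornology.IsBounded (Set.range (e ∘ g)) := by
    refine (Metric.isBounded_iff_subset_closedBall 0).2 ⟨1, ?_⟩
    rintro _ ⟨n, rfl⟩
    simp [he.1]
  have hweak (f : StrongDual ℂ H) : Tendsto (fun n => f (e (g n))) atTop (𝓝 0) := by
    rw [← Nat.cofinite_eq_atTop]
    simpa [Function.comp_def] using
      (he.tendsto_inner_cofinite ((InnerProductSpace.toDual ℂ H).symm f)).comp hg.tendsto_cofinite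
  obtain ⟨n, hn⟩ := ((hT.tendsto_zero_of_weakly_null hbdd hweak).eventually
    (Metric.ball_mem_nhds 0 hε)).exists
  exact (Set.Infinite.natEmbedding _ hinf n).2 hn

section OrthogonalProjections

variable {ι : Type*} {p : ι → H →L[ℂ] H} (hp : ∀ i, IsStarProjection (p i))
  (horth : Pairwise fun i j => p i * p j = 0)
include hp horth

theorem norm_sq_sum_apply_of_orthogonal (s : Finset ι) (v : H) :
    ‖∑ i ∈ s, p i v‖ ^ 2 = ∑ i ∈ s, ‖p i v‖ ^ 2 := by
  have hq := IsStarProjection.sum hp horth s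
  have key : ((‖(∑ i ∈ s, p i) v‖ ^ 2 : ℝ) : ℂ) = ((∑ i ∈ s, ‖p i v‖ ^ 2 : ℝ) : ℂ) := by
    rw [← hq.inner_self_apply, sum_apply, inner_sum, Complex.ofReal_sum]
    exact Finset.sum_congr rfl fun i _ => (hp i).inner_self_apply v
  rw [← sum_apply]
  exact_mod_cast key

theorem sum_norm_sq_apply_le_of_orthogonal (s : Finset ι) (v : H) :
    ∑ i ∈ s, ‖p i v‖ ^ 2 ≤ ‖v‖ ^ 2 := by
  rw [← norm_sq_sum_apply_of_orthogonal hp horth, ← sum_apply]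
  gcongr
  exact (IsStarProjection.sum hp horth s).norm_apply_le v

theorem summable_norm_sq_apply_of_orthogonal (v : H) : Summable fun i => ‖p i v‖ ^ 2 :=
  summable_of_sum_le (fun _ => sq_nonneg _) (sum_norm_sq_apply_le_of_orthogonal hp horth · v)

theorem tsum_norm_sq_apply_le_of_orthogonal (v : H) : ∑' i, ‖p i v‖ ^ 2 ≤ ‖v‖ ^ 2 :=
  (summable_norm_sq_apply_of_orthogonal hp horth v).tsum_le_of_sum_le
    (sum_norm_sq_apply_le_of_orthogonal hp horth · v)

theorem summable_apply_of_orthogonal (v : H) : Summable fun i => p i v := by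
  refine summable_iff_vanishing_norm.2 fun ε hε => ?_
  obtain ⟨s, hs⟩ := summable_iff_vanishing_norm.1 (summable_norm_sq_apply_of_orthogonal hp horth v)
    (ε ^ 2) (by positivity)
  refine ⟨s, fun t ht => ?_⟩
  have h := hs t ht
  rw [Real.norm_of_nonneg (Finset.sum_nonneg fun _ _ => sq_nonneg _),
    ← norm_sq_sum_apply_of_orthogonal hp horth] at h
  exact (pow_lt_pow_iff_left₀ (norm_nonneg _) hε.le two_ne_zero).1 h

end OrthogonalProjections

theorem projCLM_eq_starProjection (s : Set H) :
    projCLM s = (span ℂ s).topologicalClosure.starProjection :=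
  rfl

theorem isStarProjection_projCLM (s : Set H) : IsStarProjection (projCLM s) :=
  isStarProjection_starProjection

theorem hasSum_apply_projCLM_iUnion_range {ι : Type*} {p : ι → H →L[ℂ] H}
    (hp : ∀ i, IsStarProjection (p i)) (horth : Pairwise fun i j => p i * p j = 0) (v : H) :
    HasSum (fun i => p i v) (projCLM (⋃ i, Set.range (p i)) v) := by
  set S := span ℂ (⋃ i, Set.range (p i))
  set K := S.topologicalClosure
  have hsum := summable_apply_of_orthogonal hp horth v
  have hp_tsum (j : ι) : p j (∑' i, p i v) = p j v := by
    rw [(p j).map_tsum hsum, tsum_eq_single j fun i hij => ?_]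
    · rw [← mul_apply_eq_comp, (hp j).isIdempotentElem.eq]
    · rw [← mul_apply_eq_comp, horth hij.symm, zero_apply]
  have hmem : ∑' i, p i v ∈ K := by
    refine S.isClosed_topologicalClosure.mem_of_tendsto hsum.hasSum
      (Eventually.of_forall fun t => K.sum_mem fun i _ => ?_)
    exact le_topologicalClosure _ (subset_span (Set.mem_iUnion_of_mem i (Set.mem_range_self v)))
  have horthogonal : v - ∑' i, p i v ∈ Kᗮ := by
    rw [orthogonal_closure]
    refine (isOrtho_span.2 ?_).ge (mem_span_singleton_self _)
    rintro _ hu _ rfl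
    obtain ⟨j, y, rfl⟩ := Set.mem_iUnion.1 hu
    rw [(hp j).inner_apply_left, map_sub, hp_tsum, sub_self, inner_zero_right]
  rw [projCLM_eq_starProjection, eq_starProjection_of_mem_orthogonal hmem horthogonal]
  exact hsum.hasSum

theorem projCLM_iUnion_range_projCLM {ι : Type*} (s : ι → Set H) :
    projCLM (⋃ i, Set.range (projCLM (s i))) = projCLM (⋃ i, s i) := by
  have hrange (i : ι) : Set.range (projCLM (s i)) = (span ℂ (s i)).topologicalClosure := by
    rw [projCLM_eq_starProjection, ← ContinuousLinearMap.coe_coe, ← LinearMap.coe_range,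
      range_starProjection]
  rw [Set.iUnion_congr hrange]
  simp only [projCLM_eq_starProjection]
  congr 1
  refine le_antisymm (topologicalClosure_minimal _ ?_ (isClosed_topologicalClosure _)) ?_
  · refine span_le.2 (Set.iUnion_subset fun i => ?_)
    exact topologicalClosure_mono (span_mono (Set.subset_iUnion s i))
  · refine topologicalClosure_mono (span_mono (Set.iUnion_mono fun i => ?_))
    exact subset_span.trans (le_topologicalClosure _)

theorem projCLM_mul_projCLM_eq_zero {s t : Set H} (h : ∀ u ∈ s, ∀ v ∈ t, ⟪u, v⟫ = 0) :
    projCLM s * projCLM t = 0 :=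
  (isOrtho_span.2 h : span ℂ s ⟂ span ℂ t).topologicalClosure.starProjection_comp_starProjection

theorem projCLM_eq_one_of_dense {s : Set H} (hs : (span ℂ s).topologicalClosure = ⊤) :
    projCLM s = 1 := by
  ext v
  rw [projCLM_eq_starProjection, starProjection_eq_self_iff.2 (hs ▸ mem_top),
    one_apply_eq_self]

theorem isCompactOperator_projCLM_of_finite {s : Set H} (hs : s.Finite) :
    IsCompactOperator (projCLM s) := by
  set K := (span ℂ s).topologicalClosure
  have : FiniteDimensional ℂ (span ℂ s) := FiniteDimensional.span_of_finite ℂ hs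
  have : FiniteDimensional ℂ K :=
    finiteDimensional_of_le (closed_of_finiteDimensional _).submodule_topologicalClosure_eq.le
  exact (isCompactOperator_of_locallyCompactSpace_dom K.orthogonalProjectionOnto).clm_comp
    K.subtypeL

theorem projCLM_union_of_orthogonal {s t : Set H} (h : ∀ u ∈ s, ∀ v ∈ t, ⟪u, v⟫ = 0) :
    projCLM (s ∪ t) = projCLM s + projCLM t := by
  set p : Bool → H →L[ℂ] H := fun b => projCLM (cond b s t)
  have horth : Pairwise fun i j => p i * p j = 0 := by
    have h' : ∀ v ∈ t, ∀ u ∈ s, ⟪v, u⟫ = 0 := fun v hv u hu => by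
      rw [← inner_conj_symm, h u hu v hv, map_zero]
    rintro (_ | _) (_ | _) hij
    exacts [(hij rfl).elim, projCLM_mul_projCLM_eq_zero h', projCLM_mul_projCLM_eq_zero h,
      (hij rfl).elim]
  ext v
  have hsum := hasSum_apply_projCLM_iUnion_range (fun b => isStarProjection_projCLM _) horth v
  rw [projCLM_iUnion_range_projCLM, ← Set.union_eq_iUnion] at hsum
  simpa [p, add_comm] using hsum.unique (hasSum_fintype _)

namespace IsFAProb

variable {X : Type} {μ : Set X → ℝ} (hμ : IsFAProb μ)
include hμ

theorem empty : μ ∅ = 0 := by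
  simpa using hμ.2.2 ∅ ∅ (Set.inter_self ∅)

theorem mono {S T : Set X} (h : S ⊆ T) : μ S ≤ μ T := by
  have := hμ.2.2 S (T \ S) (Set.inter_sdiff_self S T)
  rw [Set.union_sdiff_cancel h] at this
  linarith [hμ.1 (T \ S)]

-- A non-summable family would have `tsum` equal to `0`, forcing every term to vanish.
theorem summable_of_countablyAdditive (hca : CountablyAdditiveMeas μ) {S : ℕ → Set X}
    (hd : Pairwise (Function.onFun Disjoint S)) : Summable fun n => μ (S n) := by
  by_contra hns
  have hzero (n : ℕ) : μ (S n) = 0 := by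
    refine le_antisymm ?_ (hμ.1 _)
    calc μ (S n) ≤ μ (⋃ n, S n) := hμ.mono (Set.subset_iUnion S n)
      _ = 0 := by rw [hca S hd, tsum_eq_zero_of_not_summable hns]
  exact hns (by simp [hzero])

variable [MeasurableSpace X]

def toMeasure (hca : CountablyAdditiveMeas μ) : Measure X :=
  Measure.ofMeasurable (fun s _ => ENNReal.ofReal (μ s)) (by simp [hμ.empty])
    fun S _ hd => by
      rw [hca S hd, ENNReal.ofReal_tsum_of_nonneg (fun n => hμ.1 _)
        (hμ.summable_of_countablyAdditive hca hd)]

variable (hca : CountablyAdditiveMeas μ)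

theorem toMeasure_apply {s : Set X} (hs : MeasurableSet s) :
    hμ.toMeasure hca s = ENNReal.ofReal (μ s) :=
  Measure.ofMeasurable_apply s hs

theorem isProbabilityMeasure_toMeasure : IsProbabilityMeasure (hμ.toMeasure hca) :=
  ⟨by rw [hμ.toMeasure_apply hca MeasurableSet.univ, hμ.2.1, ENNReal.ofReal_one]⟩

theorem nullSingletonClass_toMeasure [MeasurableSingletonClass X]
    (hsing : VanishesOnSingletons μ) : NullSingletonClass (hμ.toMeasure hca) :=
  ⟨fun x => by rw [hμ.toMeasure_apply hca (measurableSet_singleton x), hsing, ENNReal.ofReal_zero]⟩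

end IsFAProb

theorem Orthonormal.integrable_inner_apply {X E : Type*} [MeasurableSpace X]
    [DiscreteMeasurableSpace X] [NormedAddCommGroup E] [InnerProductSpace ℂ E] {e : X → E}
    (he : Orthonormal ℂ e) (ν : Measure X) [IsFiniteMeasure ν] (x : E →L[ℂ] E) :
    Integrable (fun α => ⟪e α, x (e α)⟫) ν := by
  refine .of_bound Measurable.of_discrete.aestronglyMeasurable ‖x‖ (ae_of_all _ fun α => ?_)
  simpa [he.1 α] using norm_inner_le_norm (𝕜 := ℂ) (e α) (x (e α)) |>.trans
    (mul_le_mul_of_nonneg_left (x.le_opNorm (e α)) (norm_nonneg _))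

section DiagonalState

variable {X : Type*} [MeasurableSpace X] [DiscreteMeasurableSpace X] {E : Type}
  [NormedAddCommGroup E] [InnerProductSpace ℂ E] {e : X → E}
  (he : Orthonormal ℂ e) (ν : Measure X) [IsFiniteMeasure ν]
include he

def diagonalState : (E →L[ℂ] E) →ₗ[ℂ] ℂ where
  toFun x := ∫ α, ⟪e α, x (e α)⟫ ∂ν
  map_add' x y := by
    simp only [add_apply, inner_add_right]
    exact integral_add (he.integrable_inner_apply ν x) (he.integrable_inner_apply ν y)
  map_smul' c x := by
    simp only [smul_apply, inner_smul_right, RingHom.id_apply]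
    exact integral_const_mul c _

theorem diagonalState_apply (x : E →L[ℂ] E) :
    diagonalState he ν x = ∫ α, ⟪e α, x (e α)⟫ ∂ν :=
  rfl

theorem isStateB_diagonalState [IsProbabilityMeasure ν] : IsStateB (diagonalState he ν) := by
  refine ⟨?_, fun x hx => ?_⟩
  · simp [diagonalState_apply, inner_self_eq_norm_sq_to_K, he.1]
  · refine integral_nonneg fun α => ?_
    rw [Pi.zero_apply, ← inner_conj_symm, starRingEnd_apply, star_nonneg_iff]
    exact hx (e α)

theorem singularB_diagonalState [CompleteSpace E] [NullSingletonClass ν] :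
    SingularB (diagonalState he ν) := by
  intro x hx
  have hcount := (hx.tendsto_cofinite_apply_orthonormal he).countable_compl_preimage_ker
  rw [ker_nhds] at hcount
  refine integral_eq_zero_of_ae ?_
  filter_upwards [measure_eq_zero_iff_ae_notMem.1 (hcount.measure_zero ν)] with α hα
  simp_all

theorem countablyAdditiveB_diagonalState [CompleteSpace E] [IsProbabilityMeasure ν] :
    CountablyAdditiveB (diagonalState he ν) := by
  intro p hp horth
  replace hp (n : ℕ) : IsStarProjection (p n) := isProjB_iff_isStarProjection.1 (hp n)
  have hbound_integrable : Integrable (fun α => ∑' n, ‖p n (e α)‖ ^ 2) ν := by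
    refine .of_bound Measurable.of_discrete.aestronglyMeasurable 1 (ae_of_all _ fun α => ?_)
    rw [Real.norm_of_nonneg (tsum_nonneg fun n => sq_nonneg _)]
    simpa [he.1 α] using tsum_norm_sq_apply_le_of_orthogonal hp horth (e α)
  refine (hasSum_integral_of_dominated_convergence (fun n α => ‖p n (e α)‖ ^ 2)
    (fun n => (he.integrable_inner_apply ν (p n)).aestronglyMeasurable)
    (fun n => ae_of_all _ fun α => ?_)
    (ae_of_all _ fun α => summable_norm_sq_apply_of_orthogonal hp horth (e α))
    hbound_integrable (ae_of_all _ fun α => ?_)).tsum_eq.symm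
  · simp [(hp n).inner_self_apply]
  · simpa using (hasSum_apply_projCLM_iUnion_range hp horth (e α)).mapL (innerSL ℂ (e α))

end DiagonalState

theorem IsStateB.nonneg_of_isStarProjection {φ : (H →L[ℂ] H) →ₗ[ℂ] ℂ} (hφ : IsStateB φ)
    {p : H →L[ℂ] H} (hp : IsStarProjection p) : 0 ≤ φ p :=
  hφ.2 p fun v => by
    rw [← inner_conj_symm, hp.inner_self_apply, Complex.conj_ofReal]
    exact Complex.zero_le_real.2 (sq_nonneg _)

section StateMeasure

variable {X : Type} (e : X → H) (φ : (H →L[ℂ] H) →ₗ[ℂ] ℂ)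

def stateMeasure (S : Set X) : ℝ := (φ (projCLM (e '' S))).re

variable {e φ}

theorem ofReal_stateMeasure (hφ : IsStateB φ) (S : Set X) :
    (stateMeasure e φ S : ℂ) = φ (projCLM (e '' S)) :=
  (Complex.eq_re_of_ofReal_le (hφ.nonneg_of_isStarProjection (isStarProjection_projCLM _))).symm

theorem isFAProb_stateMeasure (b : HilbertBasis X ℂ H) (hφ : IsStateB φ) :
    IsFAProb (stateMeasure b φ) := by
  refine ⟨fun S => ?_, ?_, fun S T hST => ?_⟩
  · exact Complex.zero_le_real.1 (ofReal_stateMeasure hφ S ▸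
      hφ.nonneg_of_isStarProjection (isStarProjection_projCLM _))
  · rw [stateMeasure, Set.image_univ, projCLM_eq_one_of_dense b.dense_span, hφ.1, Complex.one_re]
  · rw [stateMeasure, Set.image_union, projCLM_union_of_orthogonal
      (b.orthonormal.inner_eq_zero_of_disjoint (Set.disjoint_iff_inter_eq_empty.2 hST)),
      map_add, Complex.add_re]
    rfl

theorem countablyAdditiveMeas_stateMeasure (he : Orthonormal ℂ e) (hφ : IsStateB φ)
    (hca : CountablyAdditiveB φ) : CountablyAdditiveMeas (stateMeasure e φ) := by
  intro S hd
  have h := hca (fun n => projCLM (e '' S n))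
    (fun n => isProjB_iff_isStarProjection.2 (isStarProjection_projCLM _))
    fun m n hmn => projCLM_mul_projCLM_eq_zero (he.inner_eq_zero_of_disjoint (hd hmn))
  rw [projCLM_iUnion_range_projCLM, ← Set.image_iUnion] at h
  apply Complex.ofReal_injective
  simpa only [Complex.ofReal_tsum, ofReal_stateMeasure hφ] using h

theorem vanishesOnSingletons_stateMeasure (hsing : SingularB φ) :
    VanishesOnSingletons (stateMeasure e φ) := fun x => by
  rw [stateMeasure, Set.image_singleton,
    hsing _ (isCompactOperator_projCLM_of_finite (Set.finite_singleton _)), Complex.zero_re]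

end StateMeasure

theorem exists_measure_iff_exists_singular_state {X : Type} (b : HilbertBasis X ℂ H) :
    (∃ μ : Set X → ℝ, IsFAProb μ ∧ CountablyAdditiveMeas μ ∧ VanishesOnSingletons μ) ↔
      ∃ φ : (H →L[ℂ] H) →ₗ[ℂ] ℂ, IsStateB φ ∧ SingularB φ ∧ CountablyAdditiveB φ := by
  constructor
  · rintro ⟨μ, hμ, hca, hsing⟩
    let _ : MeasurableSpace X := ⊤
    have := hμ.isProbabilityMeasure_toMeasure hca
    have := hμ.nullSingletonClass_toMeasure hca hsing
    exact ⟨diagonalState b.orthonormal (hμ.toMeasure hca), isStateB_diagonalState _ _,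
      singularB_diagonalState _ _, countablyAdditiveB_diagonalState _ _⟩
  · rintro ⟨φ, hφ, hsing, hca⟩
    exact ⟨stateMeasure b φ, isFAProb_stateMeasure b hφ,
      countablyAdditiveMeas_stateMeasure b.orthonormal hφ hca,
      vanishesOnSingletons_stateMeasure hsing⟩

theorem ulam_rvm_iff_singular_state_BH_general (X : Type) :
    (∃ μ : Set X → ℝ, IsFAProb μ ∧ CountablyAdditiveMeas μ ∧ VanishesOnSingletons μ) ↔
      (∃ φ : (L2 X →L[ℂ] L2 X) →ₗ[ℂ] ℂ,
        IsStateB φ ∧ SingularB φ ∧ CountablyAdditiveB φ) :=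
  exists_measure_iff_exists_singular_state default

/-- Theorem 5 of "Quantum measurable cardinals": an uncountable cardinal `κ` is Ulam
real-valued measurable iff there is a singular countably additive state on `B(l²(κ))`. -/
theorem ulam_rvm_iff_singular_state_BH (κ : Cardinal.{0}) (hκ : Cardinal.aleph0 < κ)
    (X : Type) (hX : Cardinal.mk X = κ) :
    (∃ μ : Set X → ℝ, IsFAProb μ ∧ CountablyAdditiveMeas μ ∧ VanishesOnSingletons μ) ↔
      (∃ φ : (L2 X →L[ℂ] L2 X) →ₗ[ℂ] ℂ,
        IsStateB φ ∧ SingularB φ ∧ CountablyAdditiveB φ) :=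
  ulam_rvm_iff_singular_state_BH_general X
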